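/- arXiv:0707.0137 — 4 statements merged into one kernel-verified Lean document; each statement's English description precedes it below -/
import Mathlib

section
/- Let G be a group, E an equivalence relation on G, and X_E = {a⁻¹b : a, b ∈ G, E(a,b)}, with G_E the subgroup generated by X_E. Then the index [G : G_E] is at most the number of equivalence classes of E. In particular, if a⁻¹b ∉ G_E then ¬E(a,b). -/
theorem Subgroup.inv_mul_mem_closure_of_rel {G : Type*} [Group G] {r : G → G → Prop} {a b : G}
    (hab : r a b) : a⁻¹ * b ∈ Subgroup.closure {x : G | ∃ a b : G, r a b ∧ x = a⁻¹ * b} :=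
  Subgroup.subset_closure ⟨a, b, hab, rfl⟩

theorem QuotientGroup.mk_quotient_le_mk_quot {G : Type*} [Group G] {H : Subgroup G}
    {r : G → G → Prop} (h : ∀ a b : G, r a b → a⁻¹ * b ∈ H) :
    Cardinal.mk (G ⧸ H) ≤ Cardinal.mk (Quot r) :=
  Cardinal.mk_le_of_surjective <|
    (Quot.surjective_lift fun a b hab => QuotientGroup.eq.mpr (h a b hab)).mpr
      QuotientGroup.mk_surjective

theorem stmt_1_general {G : Type*} [Group G] (E : G → G → Prop)
    (X : Set G) (hX : X = {x : G | ∃ a b : G, E a b ∧ x = a⁻¹ * b})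
    (GE : Subgroup G) (hGE : GE = Subgroup.closure X) :
    Cardinal.mk (G ⧸ GE) ≤ Cardinal.mk (Quot E) ∧
    ∀ a b : G, a⁻¹ * b ∉ GE → ¬ E a b := by
  subst hX hGE
  have hmem : ∀ a b : G, E a b → a⁻¹ * b ∈ Subgroup.closure _ :=
    fun _ _ => Subgroup.inv_mul_mem_closure_of_rel
  exact ⟨QuotientGroup.mk_quotient_le_mk_quot hmem, fun a b hnot hab => hnot (hmem a b hab)⟩

theorem stmt_1 {G : Type*} [Group G] (E : G → G → Prop) (hE : Equivalence E)
    (X : Set G) (hX : X = {x : G | ∃ a b : G, E a b ∧ x = a⁻¹ * b})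
    (GE : Subgroup G) (hGE : GE = Subgroup.closure X) :
    Cardinal.mk (G ⧸ GE) ≤ Cardinal.mk (Quot E) ∧
    ∀ a b : G, a⁻¹ * b ∉ GE → ¬ E a b :=
  stmt_1_general E X hX GE hGE
end

section
/- Let G be a group and X ⊆ G a symmetric subset (X = X⁻¹) that is n-thick, meaning: for every sequence g_0, …, g_{n-1} of elements of G (not necessarily distinct) there exist i < j < n with g_i⁻¹g_j ∈ X. Then X is right n-generic: there exist g_0, …, g_{n-1} ∈ G with G = ⋃_{i<n} g_i·X. Likewise X is left n-generic. -/
/-!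
If `X` is not right `n`-generic, every `n` points of `G` leave some `x` outside all of their
translates `gᵢ • X`. Choosing such points greedily produces `g₀, …, g_{n-1}` with `gᵢ⁻¹ gⱼ ∉ X`
for all `i < j`, contradicting `n`-thickness. Left genericity follows by inversion, since `X` is
symmetric.
-/

namespace Set

variable {G : Type*} [Group G]

def IsThick (X : Set G) (n : ℕ) : Prop :=
  ∀ g : Fin n → G, ∃ i j : Fin n, i < j ∧ (g i)⁻¹ * g j ∈ X

def IsRightGeneric (X : Set G) (n : ℕ) : Prop :=
  ∃ g : Fin n → G, ∀ x : G, ∃ i : Fin n, (g i)⁻¹ * x ∈ X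

def IsLeftGeneric (X : Set G) (n : ℕ) : Prop :=
  ∃ g : Fin n → G, ∀ x : G, ∃ i : Fin n, x * (g i)⁻¹ ∈ X

theorem exists_separated_prefix_of_not_isRightGeneric {X : Set G} {n : ℕ}
    (hX : ¬ X.IsRightGeneric n) {k : ℕ} (hk : k ≤ n) :
    ∃ g : Fin n → G, ∀ i j : Fin n, i < j → (j : ℕ) < k → (g i)⁻¹ * g j ∉ X := by
  induction k with
  | zero => exact ⟨1, fun _ _ _ hj => absurd hj (Nat.not_lt_zero _)⟩
  | succ k ih =>
    obtain ⟨g, hg⟩ := ih (Nat.le_of_succ_le hk)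
    obtain ⟨x, hx⟩ : ∃ x : G, ∀ i : Fin n, (g i)⁻¹ * x ∉ X := by
      simp only [IsRightGeneric, not_exists, not_forall] at hX
      exact hX g
    let m : Fin n := ⟨k, hk⟩
    refine ⟨Function.update g m x, fun i j hij hj => ?_⟩
    have hjm_le : j ≤ m := Fin.le_def.mpr (Nat.lt_succ_iff.mp hj)
    have him : i ≠ m := (hij.trans_le hjm_le).ne
    rw [Function.update_of_ne him]
    by_cases hjm : j = m
    · rw [hjm, Function.update_self]
      exact hx i
    · have hjk : (j : ℕ) < k := Fin.lt_def.mp (lt_of_le_of_ne hjm_le hjm)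
      rw [Function.update_of_ne hjm]
      exact hg i j hij hjk

theorem IsThick.isRightGeneric {X : Set G} {n : ℕ} (hX : X.IsThick n) :
    X.IsRightGeneric n := by
  by_contra hgen
  obtain ⟨g, hg⟩ := exists_separated_prefix_of_not_isRightGeneric hgen le_rfl
  obtain ⟨i, j, hij, hmem⟩ := hX g
  exact hg i j hij j.isLt hmem

theorem IsRightGeneric.isLeftGeneric_inv {X : Set G} {n : ℕ} (hX : X.IsRightGeneric n) :
    X⁻¹.IsLeftGeneric n := by
  obtain ⟨g, hg⟩ := hX
  refine ⟨fun i => (g i)⁻¹, fun x => ?_⟩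
  obtain ⟨i, hi⟩ := hg x⁻¹
  exact ⟨i, by simpa [mul_inv_rev] using hi⟩

end Set

theorem stmt_3 {G : Type*} [Group G] (X : Set G) (n : ℕ)
    (hsym : X⁻¹ = X)
    (hthick : ∀ g : Fin n → G, ∃ i j : Fin n, i < j ∧ (g i)⁻¹ * g j ∈ X) :
    (∃ g : Fin n → G, ∀ x : G, ∃ i : Fin n, (g i)⁻¹ * x ∈ X) ∧
    (∃ g : Fin n → G, ∀ x : G, ∃ i : Fin n, x * (g i)⁻¹ ∈ X) := by
  have hright : X.IsRightGeneric n := Set.IsThick.isRightGeneric hthick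
  have hleft : X⁻¹.IsLeftGeneric n := hright.isLeftGeneric_inv
  rw [hsym] at hleft
  exact ⟨hright, hleft⟩
end

section
/- Let R be a ring containing an infinite subset S with invertible differences (for all s₁ ≠ s₂ in S, s₁ − s₂ is a unit of R). Suppose P ⊆ R is n-thick with respect to the additive group (R,+): P = −P and for any a_0,…,a_{n-1} ∈ R there exist i<j<n with a_i − a_j ∈ P. Then there exist finitely many invertible elements p_0,…,p_{k-1} ∈ P ∩ R^× such that R = ⋃_{i<k} p_i⁻¹·P. In particular R = (P ∩ R^×)⁻¹ · P. -/
/-!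
Choose distinct `s₀, s₁, …` in `S` and colour a pair `i < j` by whether `(sᵢ - sⱼ) * x ∈ P`.
Among `N = (2n choose n)` indices Ramsey's theorem gives `n` indices all of whose pairs have one
colour. The second colour is impossible, since thickness applied to the `sᵢ * x` yields a pair of
the first; so all pairs have the first colour, and thickness applied to the `sᵢ` yields a pair
with `sᵢ - sⱼ ∈ P` as well. Hence the finitely many units `sᵢ - sⱼ ∈ P` with `i < j < N` serve
every `x`.
-/

open Finset

namespace SimpleGraph

variable {V : Type*} [DecidableEq V] (G : SimpleGraph V) [DecidableRel G.Adj]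

theorem exists_isNClique_or_isNClique_compl (a b : ℕ) (s : Finset V)
    (hs : (a + b).choose a ≤ #s) :
    ∃ t ⊆ s, G.IsNClique a t ∨ Gᶜ.IsNClique b t := by
  induction a generalizing b s with
  | zero => exact ⟨∅, empty_subset s, Or.inl (isNClique_empty.mpr rfl)⟩
  | succ a iha =>
    induction b generalizing s with
    | zero => exact ⟨∅, empty_subset s, Or.inr (isNClique_empty.mpr rfl)⟩
    | succ b ihb =>
      obtain ⟨v, hv⟩ : s.Nonempty := card_pos.mp ((Nat.choose_pos (by omega)).trans_le hs)
      set nbrs := (s.erase v).filter (G.Adj v)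
      set nonNbrs := (s.erase v).filter (fun u => ¬G.Adj v u)
      have hcard : #nbrs + #nonNbrs + 1 = #s := by
        rw [card_filter_add_card_filter_not, card_erase_add_one hv]
      have hpascal : (a + 1 + (b + 1)).choose (a + 1)
          = (a + (b + 1)).choose a + (a + 1 + b).choose (a + 1) := by
        rw [show a + 1 + (b + 1) = a + b + 1 + 1 by omega, Nat.choose_succ_succ,
          show a + (b + 1) = a + b + 1 by omega, show a + 1 + b = a + b + 1 by omega]
      have hnbrs : nbrs ⊆ s := (filter_subset _ _).trans (erase_subset _ _)
      have hnonNbrs : nonNbrs ⊆ s := (filter_subset _ _).trans (erase_subset _ _)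
      by_cases h : (a + (b + 1)).choose a ≤ #nbrs
      · obtain ⟨t, hts, ht | ht⟩ := iha (b + 1) nbrs h
        · refine ⟨insert v t, insert_subset hv (hts.trans hnbrs), Or.inl (ht.insert ?_)⟩
          exact fun u hu => (mem_filter.mp (hts hu)).2
        · exact ⟨t, hts.trans hnbrs, Or.inr ht⟩
      · obtain ⟨t, hts, ht | ht⟩ := ihb nonNbrs (by omega)
        · exact ⟨t, hts.trans hnonNbrs, Or.inl ht⟩
        · refine ⟨insert v t, insert_subset hv (hts.trans hnonNbrs), Or.inr (ht.insert ?_)⟩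
          intro u hu
          obtain ⟨hu, hnadj⟩ := mem_filter.mp (hts hu)
          exact (compl_adj G v u).mpr ⟨(ne_of_mem_erase hu).symm, hnadj⟩

end SimpleGraph

theorem Finset.exists_subset_pairwise_or_pairwise_not {α : Type*} [LinearOrder α]
    (c : α → α → Prop) (a b : ℕ) (s : Finset α) (hs : (a + b).choose a ≤ #s) :
    ∃ t ⊆ s, (#t = a ∧ ∀ i ∈ t, ∀ j ∈ t, i < j → c i j) ∨
      (#t = b ∧ ∀ i ∈ t, ∀ j ∈ t, i < j → ¬c i j) := by
  classical
  let G := SimpleGraph.fromRel fun i j : α => i < j ∧ c i j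
  have hadj : ∀ {i j}, i < j → (G.Adj i j ↔ c i j) := fun hij => by
    simp [G, SimpleGraph.fromRel_adj, hij, hij.ne, hij.not_gt]
  obtain ⟨t, hts, ht | ht⟩ := G.exists_isNClique_or_isNClique_compl a b s hs
  · exact ⟨t, hts, Or.inl ⟨ht.card_eq, fun i hi j hj hij => (hadj hij).mp (ht.1 hi hj hij.ne)⟩⟩
  · refine ⟨t, hts, Or.inr ⟨ht.card_eq, fun i hi j hj hij => ?_⟩⟩
    exact ((SimpleGraph.compl_adj G i j).mp (ht.1 hi hj hij.ne)).2 ∘ (hadj hij).mpr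

section Thick

variable {R : Type*} {P : Set R} {n : ℕ}

theorem exists_lt_sub_mem_of_card_eq [Sub R]
    (hthick : ∀ a : Fin n → R, ∃ i j : Fin n, i < j ∧ a i - a j ∈ P)
    {α : Type*} [LinearOrder α] (g : α → R) (t : Finset α) (ht : #t = n) :
    ∃ i ∈ t, ∃ j ∈ t, i < j ∧ g i - g j ∈ P := by
  obtain ⟨i, j, hij, h⟩ := hthick (g ∘ t.orderEmbOfFin ht)
  exact ⟨_, t.orderEmbOfFin_mem ht i, _, t.orderEmbOfFin_mem ht j,
    (t.orderEmbOfFin ht).strictMono hij, h⟩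

theorem exists_sub_mem_and_sub_mul_mem [Ring R]
    (hthick : ∀ a : Fin n → R, ∃ i j : Fin n, i < j ∧ a i - a j ∈ P) (f : ℕ → R) (x : R) :
    ∃ i j, i < j ∧ j < (n + n).choose n ∧ f i - f j ∈ P ∧ (f i - f j) * x ∈ P := by
  obtain ⟨t, hts, ⟨htcard, hmem⟩ | ⟨htcard, hnmem⟩⟩ :=
    exists_subset_pairwise_or_pairwise_not (fun i j => (f i - f j) * x ∈ P) n n
      (range ((n + n).choose n)) (by simp)
  · obtain ⟨i, hi, j, hj, hij, h⟩ := exists_lt_sub_mem_of_card_eq hthick f t htcard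
    exact ⟨i, j, hij, mem_range.mp (hts hj), h, hmem i hi j hj hij⟩
  · obtain ⟨i, hi, j, hj, hij, h⟩ := exists_lt_sub_mem_of_card_eq hthick (f · * x) t htcard
    exact absurd (sub_mul (f i) (f j) x ▸ h) (hnmem i hi j hj hij)

end Thick

theorem stmt_6_general {R : Type*} [Ring R] (S : Set R) (hSinf : S.Infinite)
    (hSdiff : ∀ s₁ ∈ S, ∀ s₂ ∈ S, s₁ ≠ s₂ → IsUnit (s₁ - s₂))
    (P : Set R) (n : ℕ)
    (hthick : ∀ a : Fin n → R, ∃ i j : Fin n, i < j ∧ a i - a j ∈ P) :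
    (∃ (k : ℕ) (p : Fin k → R), (∀ i, p i ∈ P ∧ IsUnit (p i)) ∧
      ∀ x : R, ∃ i : Fin k, p i * x ∈ P) ∧
    (∀ x : R, ∃ p ∈ P, IsUnit p ∧ p * x ∈ P) := by
  let s := hSinf.natEmbedding S
  let N := (n + n).choose n
  let T : Set R := {p | p ∈ P ∧ IsUnit p} ∩
    Set.image2 (fun i j => (s i : R) - s j) (Set.Iio N) (Set.Iio N)
  have hcover : ∀ x, ∃ p ∈ T, p * x ∈ P := fun x => by
    obtain ⟨i, j, hij, hjN, hP, hPx⟩ := exists_sub_mem_and_sub_mul_mem hthick (s · : ℕ → R) x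
    have hunit : IsUnit ((s i : R) - s j) :=
      hSdiff _ (s i).2 _ (s j).2 fun h => hij.ne (s.injective (Subtype.ext h))
    exact ⟨_, ⟨⟨hP, hunit⟩, i, hij.trans hjN, j, hjN, rfl⟩, hPx⟩
  have hT : T.Finite := ((Set.finite_Iio N).image2 _ (Set.finite_Iio N)).inter_of_right _
  obtain ⟨k, p, -, hpT⟩ := hT.fin_param
  have hcover' : ∀ x, ∃ i, p i * x ∈ P := fun x => by
    obtain ⟨q, hq, hqx⟩ := hcover x
    obtain ⟨i, rfl⟩ := hpT ▸ hq
    exact ⟨i, hqx⟩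
  have hp : ∀ i, p i ∈ P ∧ IsUnit (p i) := fun i => (hpT ▸ Set.mem_range_self i : p i ∈ T).1
  refine ⟨⟨k, p, hp, hcover'⟩, fun x => ?_⟩
  obtain ⟨i, hi⟩ := hcover' x
  exact ⟨p i, (hp i).1, (hp i).2, hi⟩

theorem stmt_6 {R : Type*} [Ring R] (S : Set R) (hSinf : S.Infinite)
    (hSdiff : ∀ s₁ ∈ S, ∀ s₂ ∈ S, s₁ ≠ s₂ → IsUnit (s₁ - s₂))
    (P : Set R) (n : ℕ) (hsym : -P = P)
    (hthick : ∀ a : Fin n → R, ∃ i j : Fin n, i < j ∧ a i - a j ∈ P) :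
    (∃ (k : ℕ) (p : Fin k → R), (∀ i, p i ∈ P ∧ IsUnit (p i)) ∧
      ∀ x : R, ∃ i : Fin k, p i * x ∈ P) ∧
    (∀ x : R, ∃ p ∈ P, IsUnit p ∧ p * x ∈ P) :=
  stmt_6_general S hSinf hSdiff P n hthick
end

section
/- Let R be a ring with an infinite subset S having invertible differences, and suppose μ is a finitely additive, translation-invariant probability measure on all subsets of the additive group (R,+) with μ(R^×) > 0. If P ⊆ R^× is right generic in the multiplicative group of units (finitely many right translates P·f_i cover R^×), then P⁻¹·(P − P) = R, i.e. every element of R has the form p⁻¹(q − r) with p, q, r ∈ P. -/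
/-!
Colour a pair `s ≠ t` of `S` by an index `i` with `t - s ∈ P f_i`. An infinite Ramsey argument
gives a sequence in `S` whose forward differences all lie in one `P f_m`; rescaling by `f_m⁻¹`
gives `c₀, c₁, …` with `c_l - c_j ∈ P` for `j < l`. Since the sets `P f_i` cover `Rˣ`, some
`P u` has measure `δ > 0`. For fixed `x` the translates `c_b x u + P u` all have measure `δ`, so
they are not pairwise disjoint: `(c_b x + q) u = (c_{b'} x + r) u` with `b' < b`, whence
`(c_b - c_{b'}) x = r - q`.
-/

open Set Filter

structure IsFinitelyAdditiveProbability {α : Type*} (μ : Set α → ℝ) : Prop where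
  nonneg : ∀ A, 0 ≤ μ A
  univ_eq_one : μ univ = 1
  union_of_disjoint : ∀ A B, Disjoint A B → μ (A ∪ B) = μ A + μ B

namespace IsFinitelyAdditiveProbability

variable {α : Type*} {μ : Set α → ℝ} (hμ : IsFinitelyAdditiveProbability μ)
include hμ

theorem empty : μ ∅ = 0 := by
  have h := hμ.union_of_disjoint ∅ ∅ (disjoint_empty _)
  rw [union_empty] at h
  linarith

theorem mono {A B : Set α} (hAB : A ⊆ B) : μ A ≤ μ B := by
  have h := hμ.union_of_disjoint A (B \ A) disjoint_sdiff_right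
  rw [union_sdiff_cancel hAB] at h
  linarith [hμ.nonneg (B \ A)]

theorem le_one (A : Set α) : μ A ≤ 1 :=
  hμ.univ_eq_one ▸ hμ.mono (subset_univ A)

theorem union_le (A B : Set α) : μ (A ∪ B) ≤ μ A + μ B := by
  rw [← union_sdiff_self, hμ.union_of_disjoint A (B \ A) disjoint_sdiff_right]
  linarith [hμ.mono (sdiff_subset : B \ A ⊆ B)]

theorem biUnion_le_sum {ι : Type*} (s : Finset ι) (B : ι → Set α) :
    μ (⋃ i ∈ s, B i) ≤ ∑ i ∈ s, μ (B i) := by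
  classical
  induction s using Finset.induction_on with
  | empty => simp [hμ.empty]
  | insert a s ha ih =>
    rw [Finset.set_biUnion_insert, Finset.sum_insert ha]
    linarith [hμ.union_le (B a) (⋃ i ∈ s, B i)]

theorem biUnion_eq_sum {ι : Type*} (s : Finset ι) {B : ι → Set α}
    (hB : (s : Set ι).PairwiseDisjoint B) : μ (⋃ i ∈ s, B i) = ∑ i ∈ s, μ (B i) := by
  classical
  induction s using Finset.induction_on with
  | empty => simp [hμ.empty]
  | insert a s ha ih =>
    rw [Finset.coe_insert, pairwiseDisjoint_insert_of_notMem ha] at hB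
    have hdisj : Disjoint (B a) (⋃ i ∈ s, B i) := disjoint_iUnion₂_right.2 fun j hj => hB.2 j hj
    rw [Finset.set_biUnion_insert, Finset.sum_insert ha, hμ.union_of_disjoint _ _ hdisj, ih hB.1]

theorem exists_pos_of_subset_iUnion {ι : Type*} [Finite ι] {A : Set α} {B : ι → Set α}
    (hAB : A ⊆ ⋃ i, B i) (hA : 0 < μ A) : ∃ i, 0 < μ (B i) := by
  cases nonempty_fintype ι
  by_contra! hB
  have hsum : μ (⋃ i ∈ Finset.univ, B i) ≤ 0 :=
    (hμ.biUnion_le_sum _ B).trans (Finset.sum_nonpos fun i _ => hB i)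
  have : μ A ≤ μ (⋃ i ∈ Finset.univ, B i) := hμ.mono (by simpa using hAB)
  linarith

theorem exists_ne_not_disjoint {D : ℕ → Set α} {δ : ℝ} (hδ : 0 < δ) (hD : ∀ b, μ (D b) = δ) :
    ∃ b b', b ≠ b' ∧ ¬Disjoint (D b) (D b') := by
  obtain ⟨n, hn⟩ := exists_nat_gt δ⁻¹
  by_contra! hdisj
  have hsum := hμ.biUnion_eq_sum (Finset.range n) (B := D) fun b _ b' _ hbb' => hdisj b b' hbb'
  simp only [hD, Finset.sum_const, Finset.card_range, nsmul_eq_mul] at hsum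
  have := hμ.le_one (⋃ b ∈ Finset.range n, D b)
  rw [inv_lt_iff_one_lt_mul₀ hδ] at hn
  linarith

end IsFinitelyAdditiveProbability

section Ramsey

variable {α ι : Type*} [Finite ι] {Q : α → α → ι → Prop}

theorem Set.Infinite.exists_infinite_forall_of_forall_ne (hQ : ∀ s t, s ≠ t → ∃ m, Q s t m)
    {T : Set α} (hT : T.Infinite) : ∃ a ∈ T, ∃ m, ∃ T' ⊆ T, T'.Infinite ∧ ∀ t ∈ T', Q a t m := by
  obtain ⟨a, ha⟩ := hT.nonempty
  have hcover : T \ {a} ⊆ ⋃ m, {t ∈ T | Q a t m} := fun t ht =>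
    have ⟨m, hm⟩ := hQ a t (Ne.symm ht.2)
    mem_iUnion.2 ⟨m, ht.1, hm⟩
  obtain ⟨m, hm⟩ : ∃ m, {t ∈ T | Q a t m}.Infinite := by
    by_contra! hfin
    exact (hT.sdiff (finite_singleton a)) ((finite_iUnion hfin).subset hcover)
  exact ⟨a, ha, m, _, sep_subset T _, hm, fun t ht => ht.2⟩

theorem exists_seq_forall_lt_of_forall_ne [Infinite α] (hQ : ∀ s t, s ≠ t → ∃ m, Q s t m) :
    ∃ (a : ℕ → α) (m : ι), ∀ j l, j < l → Q (a j) (a l) m := by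
  choose a ha m T' hT'T hT'inf hQT' using
    fun T : {T : Set α // T.Infinite} => T.2.exists_infinite_forall_of_forall_ne hQ
  let next (T : {T : Set α // T.Infinite}) : {T : Set α // T.Infinite} := ⟨T' T, hT'inf T⟩
  let chain (n : ℕ) := next^[n] ⟨univ, infinite_univ⟩
  have hchain : Antitone fun n => (chain n).1 := antitone_nat_of_succ_le fun n => by
    simpa only [chain, Function.iterate_succ_apply'] using hT'T (chain n)
  have hcolour (j l : ℕ) (hjl : j < l) : Q (a (chain j)) (a (chain l)) (m (chain j)) := by
    refine hQT' _ _ ?_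
    have : (chain l).1 ⊆ (chain (j + 1)).1 := hchain hjl
    simpa only [chain, Function.iterate_succ_apply'] using this (ha (chain l))
  obtain ⟨m₀, hm₀⟩ := Finite.exists_infinite_fiber fun n => m (chain n)
  obtain ⟨φ, hφ, hφm⟩ := extraction_of_frequently_atTop
    (Nat.frequently_atTop_iff_infinite.2 (infinite_coe_iff.1 hm₀))
  exact ⟨fun n => a (chain (φ n)), m₀, fun j l hjl => hφm j ▸ hcolour _ _ (hφ hjl)⟩

end Ramsey

section Ring

variable {R : Type*} [Ring R]

theorem exists_seq_forall_lt_sub_mem {S P : Set R} (hSinf : S.Infinite)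
    (hSdiff : ∀ s₁ ∈ S, ∀ s₂ ∈ S, s₁ ≠ s₂ → IsUnit (s₁ - s₂))
    {ι : Type*} [Finite ι] {f : ι → Rˣ} (hgen : ∀ u : Rˣ, ∃ i, ∃ p ∈ P, (u : R) = p * (f i : R)) :
    ∃ c : ℕ → R, ∀ j l, j < l → c l - c j ∈ P := by
  have : Infinite S := hSinf.to_subtype
  obtain ⟨a, m, ha⟩ := exists_seq_forall_lt_of_forall_ne (α := S)
    (Q := fun s t m => ∃ p ∈ P, (t : R) - s = p * f m) fun s t hst => by
      obtain ⟨u, hu⟩ := hSdiff t t.2 s s.2 (Subtype.coe_injective.ne hst.symm)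
      obtain ⟨m, p, hp, hpu⟩ := hgen u
      exact ⟨m, p, hp, hu ▸ hpu⟩
  refine ⟨fun j => a j * ↑(f m)⁻¹, fun j l hjl => ?_⟩
  obtain ⟨p, hp, hpa⟩ := ha j l hjl
  rwa [← sub_mul, hpa, Units.mul_inv_cancel_right]

theorem units_subset_iUnion_mul {P : Set R} {ι : Type*} {f : ι → Rˣ}
    (hgen : ∀ u : Rˣ, ∃ i, ∃ p ∈ P, (u : R) = p * (f i : R)) :
    {x : R | IsUnit x} ⊆ ⋃ i, (· * (f i : R)) '' P := by
  rintro _ ⟨u, rfl⟩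
  obtain ⟨i, p, hp, hpu⟩ := hgen u
  exact mem_iUnion.2 ⟨i, p, hp, hpu.symm⟩

theorem image_add_mul_right (a : R) (u : R) (P : Set R) :
    (fun y => (a + y) * u) '' P = (a * u + ·) '' ((· * u) '' P) := by
  rw [image_image]
  simp only [add_mul]

theorem exists_mul_eq_sub_of_not_disjoint {P : Set R} {c : ℕ → R}
    (hc : ∀ j l, j < l → c l - c j ∈ P) (x : R) (u : Rˣ) {b b' : ℕ} (hbb' : b ≠ b')
    (hD : ¬Disjoint ((fun y => (c b * x + y) * u) '' P) ((fun y => (c b' * x + y) * u) '' P)) :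
    ∃ p ∈ P, ∃ q ∈ P, ∃ r ∈ P, p * x = q - r := by
  wlog hlt : b' < b generalizing b b'
  · exact this hbb'.symm (fun h => hD h.symm) (hbb'.lt_or_gt.resolve_right hlt)
  obtain ⟨_, ⟨q, hq, rfl⟩, r, hr, hqr⟩ := not_disjoint_iff.1 hD
  have : c b * x + q = c b' * x + r := (Units.mul_left_inj u).1 hqr.symm
  exact ⟨_, hc b' b hlt, r, hr, q, hq, by rw [sub_mul, sub_eq_sub_iff_add_eq_add, this, add_comm]⟩

end Ring

theorem stmt_8_general {R : Type*} [Ring R] (S : Set R) (hSinf : S.Infinite)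
    (hSdiff : ∀ s₁ ∈ S, ∀ s₂ ∈ S, s₁ ≠ s₂ → IsUnit (s₁ - s₂))
    (μ : Set R → ℝ)
    (hμ0 : ∀ A : Set R, 0 ≤ μ A) (hμ1 : μ Set.univ = 1)
    (hμadd : ∀ A B : Set R, Disjoint A B → μ (A ∪ B) = μ A + μ B)
    (hμinv : ∀ (a : R) (A : Set R), μ ((fun x => a + x) '' A) = μ A)
    (hμunits : 0 < μ {x : R | IsUnit x})
    (P : Set R)
    (k : ℕ) (f : Fin k → Rˣ)
    (hgen : ∀ u : Rˣ, ∃ i : Fin k, ∃ p ∈ P, (u : R) = p * (f i : R)) :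
    ∀ x : R, ∃ p ∈ P, ∃ q ∈ P, ∃ r ∈ P, p * x = q - r := by
  intro x
  have hμ : IsFinitelyAdditiveProbability μ := ⟨hμ0, hμ1, hμadd⟩
  obtain ⟨c, hc⟩ := exists_seq_forall_lt_sub_mem hSinf hSdiff hgen
  obtain ⟨i, hi⟩ := hμ.exists_pos_of_subset_iUnion (units_subset_iUnion_mul hgen) hμunits
  obtain ⟨b, b', hbb', hD⟩ := hμ.exists_ne_not_disjoint hi
    (D := fun b => (fun y => (c b * x + y) * f i) '' P)
    fun b => by rw [image_add_mul_right, hμinv]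
  exact exists_mul_eq_sub_of_not_disjoint hc x (f i) hbb' hD

theorem stmt_8 {R : Type*} [Ring R] (S : Set R) (hSinf : S.Infinite)
    (hSdiff : ∀ s₁ ∈ S, ∀ s₂ ∈ S, s₁ ≠ s₂ → IsUnit (s₁ - s₂))
    (μ : Set R → ℝ)
    (hμ0 : ∀ A : Set R, 0 ≤ μ A) (hμ1 : μ Set.univ = 1)
    (hμadd : ∀ A B : Set R, Disjoint A B → μ (A ∪ B) = μ A + μ B)
    (hμinv : ∀ (a : R) (A : Set R), μ ((fun x => a + x) '' A) = μ A)
    (hμunits : 0 < μ {x : R | IsUnit x})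
    (P : Set R) (hPunits : ∀ p ∈ P, IsUnit p)
    (k : ℕ) (f : Fin k → Rˣ)
    (hgen : ∀ u : Rˣ, ∃ i : Fin k, ∃ p ∈ P, (u : R) = p * (f i : R)) :
    ∀ x : R, ∃ p ∈ P, ∃ q ∈ P, ∃ r ∈ P, p * x = q - r :=
  stmt_8_general S hSinf hSdiff μ hμ0 hμ1 hμadd hμinv hμunits P k f hgen
end
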